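/- arXiv:1507.05949 — 2 statements merged into one kernel-verified Lean document; each statement's English description precedes it below -/
import Mathlib

section
/- Let S = ⟨n₁,n₂,n₃,n₄⟩ and let f, f' ∈ PF(S) \ {F(S)} with f = λ_{ji}·n_i - n_j and f' = λ_{ki}·n_i - n_k for three distinct indices i, j, k, where λ_{ji} ≥ λ_{ki}. If A = (a_{pq}) is an RF-matrix for F(S) - f, then a_{kj} = 0. -/
/-!
If `a_{kj} ≥ 1`, then adding `n_k - n_j` to row `k` of the RF-matrix keeps every coefficient
nonnegative, so `F - f + n_k - n_j ∈ S`. Adding `(λ_{ji} - λ_{ki}) n_i ∈ S` turns this into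
`F - f' ∈ S`, which is impossible: `f'` is pseudo-Frobenius and `F - f' ≠ 0`, so
`F = f' + (F - f')` would lie in `S`.
-/

/-- The numerical semigroup generated by `n`, viewed inside `ℤ`. -/
def NS {e : ℕ} (n : Fin e → ℕ) : Set ℤ :=
  {x | ∃ a : Fin e → ℕ, x = ∑ j, (a j : ℤ) * n j}

/-- Pseudo-Frobenius numbers of the numerical semigroup generated by `n`. -/
def PF {e : ℕ} (n : Fin e → ℕ) : Set ℤ :=
  {x | x ∉ NS n ∧ ∀ i, x + (n i : ℤ) ∈ NS n}

/-- `F` is the Frobenius number: the maximum of `ℤ \ S`. -/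
def IsFrob {e : ℕ} (n : Fin e → ℕ) (F : ℤ) : Prop :=
  F ∉ NS n ∧ ∀ x : ℤ, F < x → x ∈ NS n

/-- Almost symmetry with respect to the Frobenius number `F`. -/
def AlmostSym {e : ℕ} (n : Fin e → ℕ) (F : ℤ) : Prop :=
  ∀ x : ℤ, x ∉ NS n → F - x ∉ NS n → (x ∈ PF n ∧ F - x ∈ PF n)

/-- `A` is an RF-matrix for `f`. -/
def IsRF {e : ℕ} (n : Fin e → ℕ) (f : ℤ) (A : Matrix (Fin e) (Fin e) ℤ) : Prop :=
  (∀ i, A i i = -1) ∧ (∀ i j, i ≠ j → 0 ≤ A i j) ∧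
    (∀ i, ∑ j, A i j * (n j : ℤ) = f)

/-- `K = λ_{ij} = max {K ∈ ℕ : K·n_j - n_i ∉ S}`. -/
def IsLam {e : ℕ} (n : Fin e → ℕ) (i j : Fin e) (K : ℕ) : Prop :=
  ((K : ℤ) * n j - n i ∉ NS n) ∧
    ∀ L : ℕ, ((L : ℤ) * n j - n i ∉ NS n) → L ≤ K

/-- `n` is a minimal generating system. -/
def MinGen {e : ℕ} (n : Fin e → ℕ) : Prop :=
  ∀ i, ¬ ∃ a : Fin e → ℕ, a i = 0 ∧ (n i : ℤ) = ∑ j, (a j : ℤ) * n j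


section NumericalSemigroup

variable {e : ℕ} {n : Fin e → ℕ}

lemma add_mem_NS {x y : ℤ} (hx : x ∈ NS n) (hy : y ∈ NS n) : x + y ∈ NS n := by
  obtain ⟨a, rfl⟩ := hx
  obtain ⟨b, rfl⟩ := hy
  exact ⟨a + b, by simp [add_mul, Finset.sum_add_distrib]⟩

lemma sum_mem_NS_of_nonneg {c : Fin e → ℤ} (hc : ∀ q, 0 ≤ c q) : ∑ q, c q * n q ∈ NS n :=
  ⟨fun q => (c q).toNat, by simp [Int.toNat_of_nonneg (hc _)]⟩

lemma natCast_mul_mem_NS (m : ℕ) (i : Fin e) : (m : ℤ) * n i ∈ NS n :=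
  ⟨Pi.single i m, by simp [Pi.single_apply]⟩

lemma add_mem_NS_of_mem_PF {x s : ℤ} (hx : x ∈ PF n) (hs : s ∈ NS n) (hs0 : s ≠ 0) :
    x + s ∈ NS n := by
  obtain ⟨a, rfl⟩ := hs
  obtain ⟨q, hq⟩ : ∃ q, a q ≠ 0 := by
    by_contra! h
    exact hs0 (by simp [h])
  set b : Fin e → ℕ := a - Pi.single q 1
  have hab : a = b + Pi.single q 1 := by
    ext p
    by_cases hpq : p = q
    · subst hpq
      simp only [Pi.add_apply, Pi.sub_apply, Pi.single_eq_same, b]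
      omega
    · simp [b, hpq]
  have hsplit : ∑ p, (a p : ℤ) * n p = n q + ∑ p, (b p : ℤ) * n p := by
    rw [hab]
    simp [add_mul, Finset.sum_add_distrib, Pi.single_apply, add_comm]
  rw [hsplit, ← add_assoc]
  exact add_mem_NS (hx.2 q) ⟨_, rfl⟩

lemma sub_notMem_NS_of_mem_PF {F x : ℤ} (hF : F ∉ NS n) (hx : x ∈ PF n) (hxF : x ≠ F) :
    F - x ∉ NS n := fun h =>
  hF (by simpa using add_mem_NS_of_mem_PF hx h (sub_ne_zero.mpr hxF.symm))

lemma IsRF.add_sub_mem_NS {g : ℤ} {A : Matrix (Fin e) (Fin e) ℤ} (hA : IsRF n g A)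
    {k j : Fin e} (hkj : k ≠ j) (hpos : 0 < A k j) : g + n k - n j ∈ NS n := by
  obtain ⟨hdiag, hnn, hrow⟩ := hA
  have hc : ∀ q, 0 ≤ A k q + (if q = k then 1 else 0) - (if q = j then 1 else 0) := by
    intro q
    by_cases hqk : q = k
    · subst hqk; simp [hdiag, hkj]
    by_cases hqj : q = j
    · subst hqj
      simp only [hqk, ↓reduceIte, add_zero, sub_nonneg]
      omega
    · simp [hqk, hqj, hnn k q (Ne.symm hqk)]
  convert sum_mem_NS_of_nonneg hc using 1
  simp [add_mul, sub_mul, Finset.sum_add_distrib, Finset.sum_sub_distrib, ite_mul, hrow]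

end NumericalSemigroup

theorem stmt8_general (n : Fin 4 → ℕ)
    (F : ℤ) (hF : IsFrob n F)
    (i j k : Fin 4) (hjk : j ≠ k)
    (lamji lamki : ℕ)
    (hge : lamki ≤ lamji)
    (f f' : ℤ)
    (hfeq : f = (lamji : ℤ) * n i - n j)
    (hf' : f' ∈ PF n) (hf'F : f' ≠ F) (hf'eq : f' = (lamki : ℤ) * n i - n k)
    (A : Matrix (Fin 4) (Fin 4) ℤ) (hA : IsRF n (F - f) A) :
    A k j = 0 := by
  by_contra hne
  have hrow : F - f + n k - n j ∈ NS n :=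
    hA.add_sub_mem_NS hjk.symm (lt_of_le_of_ne (hA.2.1 k j hjk.symm) (Ne.symm hne))
  have hsplit : F - f' = (F - f + n k - n j) + ((lamji - lamki : ℕ) : ℤ) * n i := by
    subst hfeq hf'eq
    push_cast [hge]
    ring
  exact sub_notMem_NS_of_mem_PF hF.1 hf' hf'F
    (hsplit ▸ add_mem_NS hrow (natCast_mul_mem_NS _ _))

theorem stmt8 (n : Fin 4 → ℕ)
    (hpos : ∀ i, 0 < n i)
    (hgcd : Finset.univ.gcd n = 1)
    (hmin : MinGen n)
    (F : ℤ) (hF : IsFrob n F)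
    (i j k : Fin 4) (hij : i ≠ j) (hik : i ≠ k) (hjk : j ≠ k)
    (lamji lamki : ℕ)
    (hlamji : IsLam n j i lamji) (hlamki : IsLam n k i lamki)
    (hge : lamki ≤ lamji)
    (f f' : ℤ)
    (hf : f ∈ PF n) (hfF : f ≠ F) (hfeq : f = (lamji : ℤ) * n i - n j)
    (hf' : f' ∈ PF n) (hf'F : f' ≠ F) (hf'eq : f' = (lamki : ℤ) * n i - n k)
    (A : Matrix (Fin 4) (Fin 4) ℤ) (hA : IsRF n (F - f) A) :
    A k j = 0 :=
  stmt8_general n F hF i j k hjk lamji lamki hge f f' hfeq hf' hf'F hf'eq A hA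
end

section
/- Let S = ⟨n₁,n₂,n₃,n₄⟩ be an almost symmetric numerical semigroup. Then the type of S is at most 5. -/
open Finset

variable {e : ℕ} {n : Fin e → ℕ}

namespace NS

lemma zero_mem : (0 : ℤ) ∈ NS n := ⟨0, by simp⟩

lemma add_mem {x y : ℤ} (hx : x ∈ NS n) (hy : y ∈ NS n) : x + y ∈ NS n := by
  obtain ⟨a, rfl⟩ := hx
  obtain ⟨b, rfl⟩ := hy
  exact ⟨a + b, by simp [add_mul, sum_add_distrib]⟩

lemma nonneg {x : ℤ} (hx : x ∈ NS n) : 0 ≤ x := by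
  obtain ⟨a, rfl⟩ := hx
  positivity

lemma sum_update_mul (a : Fin e → ℕ) (k : Fin e) (c : ℕ) :
    ∑ j, ((Function.update a k c j : ℕ) : ℤ) * n j
      = ∑ j, (a j : ℤ) * n j + ((c : ℤ) - a k) * n k := by
  rw [← add_sum_erase _ _ (mem_univ k), ← add_sum_erase _ _ (mem_univ k),
    Function.update_self,
    sum_congr rfl fun j hj => by rw [Function.update_of_ne (ne_of_mem_erase hj)]]
  ring

lemma natCast_mul_mem (c : ℕ) (j : Fin e) : (c : ℤ) * n j ∈ NS n :=
  ⟨Function.update 0 j c, by simp [sum_update_mul]⟩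

lemma natCast_mem (j : Fin e) : (n j : ℤ) ∈ NS n := by
  simpa using natCast_mul_mem 1 j

lemma sum_sub_mem {a : Fin e → ℕ} {k : Fin e} (hk : a k ≠ 0) :
    ∑ j, (a j : ℤ) * n j - n k ∈ NS n :=
  ⟨Function.update a k (a k - 1), by
    rw [sum_update_mul]; push_cast [Nat.one_le_iff_ne_zero.2 hk]; ring⟩

lemma exists_sub_mem {x : ℤ} (hx : x ∈ NS n) (hx0 : x ≠ 0) : ∃ k, x - n k ∈ NS n := by
  obtain ⟨a, rfl⟩ := hx
  obtain ⟨k, hk⟩ : ∃ k, a k ≠ 0 := by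
    by_contra! h
    simp [h] at hx0
  exact ⟨k, sum_sub_mem hk⟩

lemma exists_eq_mul_of_sub_notMem {x : ℤ} {j : Fin e} (hx : x ∈ NS n)
    (h : ∀ k, k ≠ j → x - n k ∉ NS n) : ∃ c : ℕ, x = c * n j := by
  obtain ⟨a, rfl⟩ := hx
  refine ⟨a j, sum_eq_single j (fun k _ hkj => ?_) (by simp)⟩
  by_contra hk
  exact h k hkj (sum_sub_mem (left_ne_zero_of_mul (by exact_mod_cast hk)))

end NS

namespace MinGen

lemma pos (hmin : MinGen n) (i : Fin e) : 0 < n i := by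
  by_contra! h
  exact hmin i ⟨0, rfl, by simp [show n i = 0 by omega]⟩

lemma sub_notMem (hmin : MinGen n) {i j : Fin e} (hij : i ≠ j) : (n j : ℤ) - n i ∉ NS n := by
  rintro ⟨a, ha⟩
  have haj : a j = 0 := by
    by_contra hj
    have := NS.nonneg (NS.sum_sub_mem (n := n) hj)
    have := hmin.pos i
    omega
  refine hmin j ⟨Function.update a i (a i + 1), by simp [Function.update_of_ne hij.symm, haj], ?_⟩
  rw [NS.sum_update_mul, ← ha]
  push_cast
  ring

lemma injective (hmin : MinGen n) : Function.Injective n := by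
  intro i j hij
  by_contra hne
  exact hmin.sub_notMem hne (by simpa [hij] using NS.zero_mem)

end MinGen

namespace PF

lemma add_mem {w x : ℤ} (hw : w ∈ PF n) (hx : x ∈ NS n) (hx0 : x ≠ 0) : w + x ∈ NS n := by
  obtain ⟨k, hk⟩ := NS.exists_sub_mem hx hx0
  simpa using NS.add_mem (hw.2 k) hk

lemma pos [Nontrivial (Fin e)] (hmin : MinGen n) {w : ℤ} (hw : w ∈ PF n) : 0 < w := by
  have hw0 : w ≠ 0 := fun h => hw.1 (h ▸ NS.zero_mem)
  obtain ⟨i, -, hi⟩ := exists_min_image univ n univ_nonempty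
  rcases eq_or_ne (w + n i) 0 with h | h
  · obtain ⟨j, hji⟩ := exists_ne i
    exact absurd (by simpa [show w = -n i by omega, sub_eq_neg_add] using hw.2 j)
      (hmin.sub_notMem hji.symm)
  · obtain ⟨k, hk⟩ := NS.exists_sub_mem (hw.2 i) h
    have := NS.nonneg hk
    have : n i ≤ n k := hi k (mem_univ k)
    omega

lemma le_of_isFrob {F w : ℤ} (hF : IsFrob n F) (hw : w ∈ PF n) : w ≤ F :=
  not_lt.1 fun h => hw.1 (hF.2 w h)

lemma sub_notMem {F w : ℤ} (hF : F ∉ NS n) (hw : w ∈ PF n) (hwF : w ≠ F) : F - w ∉ NS n := by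
  intro h
  exact hF (by simpa using add_mem hw h (sub_ne_zero.2 hwF.symm))

lemma sub_mem_of_almostSym {F w : ℤ} (hAS : AlmostSym n F) (hF : F ∉ NS n) (hw : w ∈ PF n)
    (hwF : w ≠ F) : F - w ∈ PF n :=
  (hAS w hw.1 (sub_notMem hF hw hwF)).2

end PF

section Cells

open scoped Classical

variable (n) in
/-- For `w ∈ PF n`, `(i, j) ∈ supportCells n w` iff some RF-matrix of `w` has a positive `(i, j)`
entry. -/
noncomputable def supportCells (w : ℤ) : Finset (Fin e × Fin e) :=
  univ.offDiag.filter fun c => w + n c.1 - n c.2 ∈ NS n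

variable (n) in
noncomputable def pureCells (w : ℤ) : Finset (Fin e × Fin e) :=
  (supportCells n w).filter fun c => ∀ k, (c.1, k) ∈ supportCells n w → k = c.2

variable (n) in
noncomputable def deadCells (F w : ℤ) : Finset (Fin e × Fin e) :=
  univ.offDiag.filter fun c => w + n c.1 - n c.2 ∉ NS n ∧ F - w + n c.2 - n c.1 ∉ NS n

variable {w : ℤ} {c : Fin e × Fin e}

lemma pureCells_subset_offDiag : pureCells n w ⊆ univ.offDiag :=
  (filter_subset _ _).trans (filter_subset _ _)

lemma mem_supportCells : c ∈ supportCells n w ↔ c.1 ≠ c.2 ∧ w + n c.1 - n c.2 ∈ NS n := by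
  simp [supportCells]

lemma mem_pureCells :
    c ∈ pureCells n w ↔ c ∈ supportCells n w ∧ ∀ k, (c.1, k) ∈ supportCells n w → k = c.2 :=
  mem_filter

lemma mem_deadCells {F : ℤ} :
    c ∈ deadCells n F w ↔
      c.1 ≠ c.2 ∧ w + n c.1 - n c.2 ∉ NS n ∧ F - w + n c.2 - n c.1 ∉ NS n := by
  simp [deadCells]

lemma exists_mem_supportCells (hw : w ∈ PF n) (hw0 : 0 < w) (i : Fin e) :
    ∃ k, (i, k) ∈ supportCells n w := by
  obtain ⟨k, hk⟩ := NS.exists_sub_mem (hw.2 i) (by omega)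
  refine ⟨k, mem_supportCells.2 ⟨fun hik => hw.1 ?_, hk⟩⟩
  simpa [show i = k from hik] using hk

lemma two_mul_le_card_pureCells_add_card_supportCells (hw : w ∈ PF n) (hw0 : 0 < w) :
    2 * e ≤ #(pureCells n w) + #(supportCells n w) := by
  rw [card_eq_sum_card_fiberwise (f := Prod.fst) (t := univ) fun _ _ => mem_univ _,
    card_eq_sum_card_fiberwise (f := Prod.fst) (t := univ) fun _ _ => mem_univ _,
    ← sum_add_distrib]
  calc 2 * e = ∑ _i : Fin e, 2 := by simp [mul_comm]
    _ ≤ _ := sum_le_sum fun i _ => ?_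
  obtain ⟨k, hk⟩ := exists_mem_supportCells hw hw0 i
  by_cases hpure : ∀ k', (i, k') ∈ supportCells n w → k' = k
  · have h1 : 0 < #{c ∈ pureCells n w | c.1 = i} :=
      card_pos.2 ⟨(i, k), mem_filter.2 ⟨mem_pureCells.2 ⟨hk, hpure⟩, rfl⟩⟩
    have h2 : 0 < #{c ∈ supportCells n w | c.1 = i} :=
      card_pos.2 ⟨(i, k), mem_filter.2 ⟨hk, rfl⟩⟩
    omega
  · push Not at hpure
    obtain ⟨k', hk', hne⟩ := hpure
    have : 1 < #{c ∈ supportCells n w | c.1 = i} :=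
      one_lt_card.2 ⟨(i, k'), mem_filter.2 ⟨hk', rfl⟩, (i, k), mem_filter.2 ⟨hk, rfl⟩,
        by simpa using hne⟩
    omega

/-- A cell in the support of `w` whose transpose is in the support of `F - w` would give
`F = (w + n i - n j) + (F - w + n j - n i) ∈ S`. -/
lemma card_supportCells_add_card_supportCells_add_card_deadCells {F : ℤ} (hF : F ∉ NS n)
    (w : ℤ) :
    #(supportCells n w) + #(supportCells n (F - w)) + #(deadCells n F w) = e * e - e := by
  have hswap : #(supportCells n (F - w))
      = #(univ.offDiag.filter fun c => F - w + n c.2 - n c.1 ∈ NS n) :=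
    card_equiv (Equiv.prodComm _ _) fun c => by simp [mem_supportCells, ne_comm]
  have hexcl : ∀ c : Fin e × Fin e,
      w + n c.1 - n c.2 ∈ NS n → F - w + n c.2 - n c.1 ∉ NS n := fun c h h' =>
    hF (by convert NS.add_mem h h' using 1; ring)
  rw [show e * e - e = #(univ.offDiag : Finset (Fin e × Fin e)) by simp [offDiag_card],
    hswap, supportCells, deadCells, card_filter, card_filter, card_filter,
    ← sum_add_distrib, ← sum_add_distrib, card_eq_sum_ones]
  refine sum_congr rfl fun c _ => ?_
  have := hexcl c
  split_ifs <;> tauto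

lemma four_mul_add_card_deadCells_le {F : ℤ} (hF : F ∉ NS n) (hw : w ∈ PF n)
    (hw' : F - w ∈ PF n) (hw0 : 0 < w) (hw0' : 0 < F - w) :
    4 * e + #(deadCells n F w) ≤ #(pureCells n w) + #(pureCells n (F - w)) + (e * e - e) := by
  have := two_mul_le_card_pureCells_add_card_supportCells hw hw0
  have := two_mul_le_card_pureCells_add_card_supportCells hw' hw0'
  have := card_supportCells_add_card_supportCells_add_card_deadCells hF w (n := n)
  omega

end Cells

section PureCells

variable {u v w : ℤ} {i j r s : Fin e}

lemma exists_eq_mul_of_mem_pureCells (hw : w ∉ NS n) (hc : (i, j) ∈ pureCells n w) :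
    ∃ a : ℕ, w + n i = a * n j := by
  obtain ⟨hsupp, hpure⟩ := mem_pureCells.1 hc
  obtain ⟨-, hmem⟩ := mem_supportCells.1 hsupp
  refine NS.exists_eq_mul_of_sub_notMem (by simpa using NS.add_mem hmem (NS.natCast_mem j))
    fun k hkj hk => ?_
  rcases eq_or_ne i k with rfl | hik
  · exact hw (by simpa using hk)
  · exact hkj (hpure k (mem_supportCells.2 ⟨hik, hk⟩))

/-- Both sides are multiples of `n j`; if `u + n r < v + n s`, then `v + n s - n r` is `u` plus a
nonzero element of `S`: a second support cell in row `s` of `v`, or `v ∈ S` if `s = r`. -/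
lemma add_eq_of_mem_pureCells (hpos : ∀ i, 0 < n i) (hu : u ∈ PF n) (hv : v ∈ PF n)
    (hru : (r, j) ∈ pureCells n u) (hsv : (s, j) ∈ pureCells n v) : u + n r = v + n s := by
  suffices key : ∀ {u v : ℤ} {r s : Fin e}, u ∈ PF n → v ∈ PF n → (r, j) ∈ pureCells n u →
      (s, j) ∈ pureCells n v → ¬ u + n r < v + n s from
    le_antisymm (not_lt.1 (key hv hu hsv hru)) (not_lt.1 (key hu hv hru hsv))
  intro u v r s hu hv hru hsv hlt
  obtain ⟨a, ha⟩ := exists_eq_mul_of_mem_pureCells hu.1 hru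
  obtain ⟨b, hb⟩ := exists_eq_mul_of_mem_pureCells hv.1 hsv
  have hab : a < b := by
    rw [ha, hb] at hlt
    exact_mod_cast lt_of_mul_lt_mul_right hlt (Int.natCast_nonneg _)
  have hmem : v + n s - n r ∈ NS n := by
    have hne : ((b - a : ℕ) : ℤ) * n j ≠ 0 :=
      mul_ne_zero (by exact_mod_cast (Nat.sub_pos_of_lt hab).ne') (by exact_mod_cast (hpos j).ne')
    convert PF.add_mem hu (NS.natCast_mul_mem (b - a) j) hne using 1
    push_cast [hab.le]
    linarith
  rcases eq_or_ne s r with rfl | hsr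
  · exact hv.1 (by simpa using hmem)
  · exact (mem_supportCells.1 (mem_pureCells.1 hru).1).1
      ((mem_pureCells.1 hsv).2 r (mem_supportCells.2 ⟨hsr, hmem⟩))

lemma disjoint_pureCells (hpos : ∀ i, 0 < n i) (hu : u ∈ PF n) (hv : v ∈ PF n) (huv : u ≠ v) :
    Disjoint (pureCells n u) (pureCells n v) :=
  disjoint_left.2 fun _ hcu hcv => huv (by simpa using add_eq_of_mem_pureCells hpos hu hv hcu hcv)

lemma card_biUnion_pureCells (hpos : ∀ i, 0 < n i) {W : Finset ℤ} (hW : ∀ w ∈ W, w ∈ PF n) :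
    #(W.biUnion (pureCells n)) = ∑ w ∈ W, #(pureCells n w) :=
  card_biUnion fun _ hu _ hv huv => disjoint_pureCells hpos (hW _ hu) (hW _ hv) huv

lemma sum_card_pureCells_le (hpos : ∀ i, 0 < n i) {W : Finset ℤ} (hW : ∀ w ∈ W, w ∈ PF n) :
    ∑ w ∈ W, #(pureCells n w) ≤ e * e - e := by
  rw [← card_biUnion_pureCells hpos hW]
  calc #(W.biUnion (pureCells n)) ≤ #(univ.offDiag : Finset (Fin e × Fin e)) :=
        card_le_card (biUnion_subset.2 fun _ _ => pureCells_subset_offDiag)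
    _ = e * e - e := by simp [offDiag_card]

lemma four_mul_card_add_sum_card_deadCells_le {F : ℤ} (hF : F ∉ NS n) {W : Finset ℤ}
    (hW : ∀ w ∈ W, w ∈ PF n ∧ 0 < w) (hpartner : ∀ w ∈ W, F - w ∈ W) :
    4 * e * #W + ∑ w ∈ W, #(deadCells n F w)
      ≤ 2 * ∑ w ∈ W, #(pureCells n w) + (e * e - e) * #W := by
  have hswap : ∑ w ∈ W, #(pureCells n (F - w)) = ∑ w ∈ W, #(pureCells n w) :=
    sum_nbij' (F - ·) (F - ·) hpartner hpartner (fun _ _ => sub_sub_cancel F _)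
      (fun _ _ => sub_sub_cancel F _) fun _ _ => rfl
  have hsum := sum_le_sum fun w hw => four_mul_add_card_deadCells_le hF (hW w hw).1
    (hW _ (hpartner w hw)).1 (hW w hw).2 (hW _ (hpartner w hw)).2
  simp only [sum_add_distrib, sum_const, smul_eq_mul, hswap] at hsum
  linarith

lemma mem_deadCells_of_add_eq {F : ℤ} (hF : F ∉ NS n) (hv : v ∈ PF n) (hvF : v ≠ F)
    (hrs : r ≠ s) (h : u + n r = v + n s) : (r, s) ∈ deadCells n F u :=
  mem_deadCells.2 ⟨hrs, by rw [show u + n r - n s = v by linarith]; exact hv.1,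
    by rw [show F - u + n s - n r = F - v by linarith]; exact PF.sub_notMem hF hv hvF⟩

/-- The owners of the pure cells of one column are distinct, and the owner of the cell in row `r`
has a dead cell `(r, r')` for every other row `r'` of the column. -/
lemma card_mul_pred_le_sum_card_deadCells (hmin : MinGen n) {F : ℤ} (hF : F ∉ NS n)
    {W : Finset ℤ} (hW : ∀ w ∈ W, w ∈ PF n ∧ w ≠ F) {C : Finset (Fin e × Fin e)}
    (hC : C ⊆ W.biUnion (pureCells n)) (hCj : ∀ c ∈ C, c.2 = j) :
    #C * (#C - 1) ≤ ∑ w ∈ W, #(deadCells n F w) := by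
  choose! o hoW hco using fun c (hc : c ∈ C) => mem_biUnion.1 (hC hc)
  have hpure : ∀ c ∈ C, (c.1, j) ∈ pureCells n (o c) := fun c hc => by
    rw [← hCj c hc]
    exact hco c hc
  have hrow : ∀ c ∈ C, ∀ c' ∈ C, o c + n c.1 = o c' + n c'.1 := fun c hc c' hc' =>
    add_eq_of_mem_pureCells hmin.pos (hW _ (hoW c hc)).1 (hW _ (hoW c' hc')).1
      (hpure c hc) (hpure c' hc')
  have hext : ∀ c ∈ C, ∀ c' ∈ C, c.1 = c'.1 → c = c' := fun c hc c' hc' h =>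
    Prod.ext h ((hCj c hc).trans (hCj c' hc').symm)
  have hinj : Set.InjOn o C := fun c hc c' hc' h =>
    hext c hc c' hc' (hmin.injective (by simpa [h] using hrow c hc c' hc'))
  have hdead : ∀ c ∈ C, #C - 1 ≤ #(deadCells n F (o c)) := by
    intro c hc
    rw [← card_erase_of_mem hc]
    refine card_le_card_of_injOn (fun c' => (c.1, c'.1)) (fun c' hc' => ?_) fun c₁ h₁ c₂ h₂ h =>
      hext c₁ (mem_of_mem_erase h₁) c₂ (mem_of_mem_erase h₂) (Prod.ext_iff.1 h).2
    obtain ⟨hne, hc'⟩ := mem_erase.1 hc'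
    exact mem_deadCells_of_add_eq hF (hW _ (hoW c' hc')).1 (hW _ (hoW c' hc')).2
      (fun h => hne (hext c' hc' c hc h.symm)) (hrow c hc c' hc')
  calc #C * (#C - 1) = ∑ _c ∈ C, (#C - 1) := by simp
    _ ≤ ∑ c ∈ C, #(deadCells n F (o c)) := sum_le_sum hdead
    _ = ∑ w ∈ C.image o, #(deadCells n F w) := by rw [sum_image hinj]
    _ ≤ ∑ w ∈ W, #(deadCells n F w) := sum_le_sum_of_subset (image_subset_iff.2 hoW)

lemma mul_le_sum_card_deadCells (hmin : MinGen n) {F : ℤ} (hF : F ∉ NS n) {W : Finset ℤ}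
    (hW : ∀ w ∈ W, w ∈ PF n ∧ w ≠ F) {k : ℕ} (hk : e * k < ∑ w ∈ W, #(pureCells n w)) :
    (k + 1) * k ≤ ∑ w ∈ W, #(deadCells n F w) := by
  rw [← card_biUnion_pureCells hmin.pos fun w hw => (hW w hw).1] at hk
  obtain ⟨j, -, hj⟩ := exists_lt_card_fiber_of_mul_lt_card_of_maps_to
    (t := (univ : Finset (Fin e))) (f := Prod.snd) (fun _ _ => mem_univ _)
    (by rwa [card_univ, Fintype.card_fin])
  calc (k + 1) * k ≤ #{c ∈ W.biUnion (pureCells n) | c.2 = j} *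
        (#{c ∈ W.biUnion (pureCells n) | c.2 = j} - 1) := Nat.mul_le_mul hj (by omega)
    _ ≤ _ := card_mul_pred_le_sum_card_deadCells hmin hF hW (filter_subset _ _)
        fun _ hc => (mem_filter.1 hc).2

end PureCells

theorem stmt10_general (n : Fin 4 → ℕ)
    (hmin : MinGen n)
    (F : ℤ) (hF : IsFrob n F) (hAS : AlmostSym n F) :
    (PF n).ncard ≤ 5 := by
  classical
  set W : Finset ℤ := {w ∈ Ioo 0 F | w ∈ PF n}
  have hmemW : ∀ {w}, w ∈ W ↔ w ∈ PF n ∧ 0 < w ∧ w < F := by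
    simp only [W, mem_filter, mem_Ioo]
    tauto
  have hpartner : ∀ w ∈ W, F - w ∈ W := fun w hw => by
    obtain ⟨hw, hw0, hwF⟩ := hmemW.1 hw
    exact hmemW.2 ⟨PF.sub_mem_of_almostSym hAS hF.1 hw hwF.ne, by omega, by omega⟩
  have hcount := four_mul_card_add_sum_card_deadCells_le hF.1
    (fun w hw => ⟨(hmemW.1 hw).1, (hmemW.1 hw).2.1⟩) hpartner
  have hpure := sum_card_pureCells_le hmin.pos fun w hw => (hmemW.1 hw).1
  have hdead : 4 * 2 < ∑ w ∈ W, #(pureCells n w) → (2 + 1) * 2 ≤ ∑ w ∈ W, #(deadCells n F w) :=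
    mul_le_sum_card_deadCells hmin hF.1 fun w hw => ⟨(hmemW.1 hw).1, (hmemW.1 hw).2.2.ne⟩
  have hPF : PF n ⊆ ↑(insert F W) := fun w hw => by
    rcases eq_or_ne w F with rfl | hwF
    · exact mem_insert_self _ _
    · exact mem_insert_of_mem <|
        hmemW.2 ⟨hw, PF.pos hmin hw, (PF.le_of_isFrob hF hw).lt_of_ne hwF⟩
  calc (PF n).ncard ≤ (↑(insert F W) : Set ℤ).ncard := Set.ncard_le_ncard hPF (finite_toSet _)
    _ ≤ #W + 1 := by rw [Set.ncard_coe_finset]; exact card_insert_le _ _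
    _ ≤ 5 := by omega

theorem stmt10 (n : Fin 4 → ℕ)
    (hpos : ∀ i, 0 < n i)
    (hgcd : Finset.univ.gcd n = 1)
    (hmin : MinGen n)
    (F : ℤ) (hF : IsFrob n F) (hAS : AlmostSym n F) :
    (PF n).ncard ≤ 5 :=
  stmt10_general n hmin F hF hAS
end
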